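/- arXiv:2006.13699 — 2 statements merged into one kernel-verified Lean document; each statement's English description precedes it below -/
import Mathlib

section
/- Let θ̂ be the unique real with p_A·Φ^c((θ̂ − μ)/s_A) + p_B·Φ^c((θ̂ − μ)/s_B) = α₁, and set x_A = Φ^c((θ̂ − μ)/s_A), x_B = Φ^c((θ̂ − μ)/s_B) (the group-oblivious selection fractions of the two groups). Then: (i) if α₁ < 1/2 then x_B < α₁ < x_A (the high-variance group A is overselected and the low-variance group B is underselected); (ii) if α₁ = 1/2 then x_A = x_B = 1/2; (iii) if α₁ > 1/2 then x_A < α₁ < x_B. -/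
open MeasureTheory Set

/-- Standard normal density. -/
noncomputable def phi (t : ℝ) : ℝ := Real.exp (-t ^ 2 / 2) / Real.sqrt (2 * Real.pi)

/-- Standard normal CDF. -/
noncomputable def Phi (t : ℝ) : ℝ := ∫ u in Set.Iic t, phi u

/-- Standard normal complementary CDF. -/
noncomputable def Phic (t : ℝ) : ℝ := 1 - Phi t

/-! Both selection fractions are `Φᶜ` evaluated at `(θ̂ - μ) / s` with the same numerator. Since
`s_B < s_A` and `Φᶜ` is strictly decreasing with `Φᶜ 0 = 1/2` (by symmetry of `φ`), the sign of
`θ̂ - μ` decides which fraction is larger and on which side of `1/2` they both lie, while the budget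
equation makes `α₁` a strict convex combination of the two. -/

open ProbabilityTheory

lemma phi_eq_gaussianPDFReal : phi = gaussianPDFReal 0 1 := by
  ext t
  simp [phi, gaussianPDFReal, div_eq_inv_mul]

lemma integrable_phi : Integrable phi :=
  phi_eq_gaussianPDFReal ▸ integrable_gaussianPDFReal 0 1

lemma integral_phi : ∫ t, phi t = 1 :=
  phi_eq_gaussianPDFReal ▸ integral_gaussianPDFReal_eq_one 0 one_ne_zero

lemma phi_neg (t : ℝ) : phi (-t) = phi t := by
  simp [phi]

lemma Phi_strictMono : StrictMono Phi := by
  intro a b hab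
  have hdiff : Phi b - Phi a = ∫ x in a..b, phi x :=
    intervalIntegral.integral_Iic_sub_Iic integrable_phi.integrableOn integrable_phi.integrableOn
  have hpos : 0 < ∫ x in a..b, phi x :=
    intervalIntegral.intervalIntegral_pos_of_pos integrable_phi.intervalIntegrable
      (fun x => phi_eq_gaussianPDFReal ▸ gaussianPDFReal_pos 0 1 x one_ne_zero)
      hab
  linarith

lemma Phic_strictAnti : StrictAnti Phic :=
  fun _ _ hab => sub_lt_sub_left (Phi_strictMono hab) 1

lemma Phic_eq_Phi_neg (x : ℝ) : Phic x = Phi (-x) := by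
  have hreflect : Phi (-x) = ∫ u in Ioi x, phi u := by
    rw [Phi, ← neg_neg x, ← integral_comp_neg_Iic, neg_neg]
    simp only [phi_neg]
  have hsplit : Phi x + ∫ u in Ioi x, phi u = ∫ u, phi u :=
    intervalIntegral.integral_Iic_add_Ioi integrable_phi.integrableOn integrable_phi.integrableOn
  rw [Phic, hreflect, ← integral_phi, ← hsplit]
  ring

lemma Phic_zero : Phic 0 = 1 / 2 := by
  have h := Phic_eq_Phi_neg 0
  rw [neg_zero] at h
  rw [Phic] at h ⊢
  linarith

lemma Phic_lt_half {x : ℝ} (hx : 0 < x) : Phic x < 1 / 2 :=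
  Phic_zero ▸ Phic_strictAnti hx

lemma half_lt_Phic {x : ℝ} (hx : x < 0) : 1 / 2 < Phic x :=
  Phic_zero ▸ Phic_strictAnti hx

lemma Phic_div_lt_Phic_div_of_pos {t a b : ℝ} (ht : 0 < t) (ha : 0 < a) (hab : a < b) :
    Phic (t / a) < Phic (t / b) :=
  Phic_strictAnti (div_lt_div_of_pos_left ht ha hab)

lemma Phic_div_lt_Phic_div_of_neg {t a b : ℝ} (ht : t < 0) (ha : 0 < a) (hab : a < b) :
    Phic (t / b) < Phic (t / a) := by
  refine Phic_strictAnti ?_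
  have := div_lt_div_of_pos_left (neg_pos.2 ht) ha hab
  rw [neg_div, neg_div] at this
  exact neg_lt_neg_iff.1 this

lemma convex_combo_mem_Ioo {p x y : ℝ} (hp : p ∈ Ioo 0 1) (hxy : x < y) :
    p * x + (1 - p) * y ∈ Ioo x y :=
  openSegment_eq_Ioo (𝕜 := ℝ) hxy ▸
    ⟨p, 1 - p, hp.1, sub_pos.2 hp.2, add_sub_cancel p 1, rfl⟩

lemma convex_combo_mem_Ioo_of_gt {p x y : ℝ} (hp : p ∈ Ioo 0 1) (hyx : y < x) :
    p * x + (1 - p) * y ∈ Ioo y x := by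
  have h := convex_combo_mem_Ioo (p := 1 - p) ⟨sub_pos.2 hp.2, sub_lt_self 1 hp.1⟩ hyx
  rwa [sub_sub_cancel, add_comm] at h

theorem group_oblivious_selection_fractions_general
    (μ σW σA σB pA α₁ θhat : ℝ)
    (hσW : 0 < σW) (hσB : 0 ≤ σB) (hσAB : σB < σA)
    (hpA : pA ∈ Set.Ioo (0 : ℝ) 1)
    (hθ : pA * Phic ((θhat - μ) / Real.sqrt (σW ^ 2 + σA ^ 2))
        + (1 - pA) * Phic ((θhat - μ) / Real.sqrt (σW ^ 2 + σB ^ 2)) = α₁) :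
    (α₁ < 1 / 2 →
      Phic ((θhat - μ) / Real.sqrt (σW ^ 2 + σB ^ 2)) < α₁ ∧
      α₁ < Phic ((θhat - μ) / Real.sqrt (σW ^ 2 + σA ^ 2))) ∧
    (α₁ = 1 / 2 →
      Phic ((θhat - μ) / Real.sqrt (σW ^ 2 + σA ^ 2)) = 1 / 2 ∧
      Phic ((θhat - μ) / Real.sqrt (σW ^ 2 + σB ^ 2)) = 1 / 2) ∧
    (1 / 2 < α₁ →
      Phic ((θhat - μ) / Real.sqrt (σW ^ 2 + σA ^ 2)) < α₁ ∧
      α₁ < Phic ((θhat - μ) / Real.sqrt (σW ^ 2 + σB ^ 2))) := by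
  have hsB : 0 < Real.sqrt (σW ^ 2 + σB ^ 2) := Real.sqrt_pos.2 (by positivity)
  have hsBA : Real.sqrt (σW ^ 2 + σB ^ 2) < Real.sqrt (σW ^ 2 + σA ^ 2) :=
    Real.sqrt_lt_sqrt (by positivity) (by nlinarith)
  rcases lt_trichotomy (θhat - μ) 0 with ht | ht | ht
  · have hA : 1 / 2 < Phic ((θhat - μ) / Real.sqrt (σW ^ 2 + σA ^ 2)) :=
      half_lt_Phic (div_neg_of_neg_of_pos ht (hsB.trans hsBA))
    obtain ⟨hlo, hhi⟩ := hθ ▸ convex_combo_mem_Ioo hpA (Phic_div_lt_Phic_div_of_neg ht hsB hsBA)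
    exact ⟨fun h => by linarith, fun h => by linarith, fun _ => ⟨hlo, hhi⟩⟩
  · rw [ht, zero_div, zero_div, Phic_zero] at hθ ⊢
    exact ⟨fun h => by linarith, fun _ => ⟨rfl, rfl⟩, fun h => by linarith⟩
  · have hA : Phic ((θhat - μ) / Real.sqrt (σW ^ 2 + σA ^ 2)) < 1 / 2 :=
      Phic_lt_half (div_pos ht (hsB.trans hsBA))
    obtain ⟨hlo, hhi⟩ :=
      hθ ▸ convex_combo_mem_Ioo_of_gt hpA (Phic_div_lt_Phic_div_of_pos ht hsB hsBA)
    exact ⟨fun _ => ⟨hlo, hhi⟩, fun h => by linarith, fun h => by linarith⟩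

/-- Under group-oblivious selection with threshold `θ̂` (given by the budget
equation), the selection fractions `x_A = Φᶜ((θ̂-μ)/s_A)`, `x_B = Φᶜ((θ̂-μ)/s_B)`
satisfy: `x_B < α₁ < x_A` if `α₁ < 1/2`; `x_A = x_B = 1/2` if `α₁ = 1/2`;
`x_A < α₁ < x_B` if `α₁ > 1/2`. -/
theorem group_oblivious_selection_fractions
    (μ σW σA σB pA α₁ θhat : ℝ)
    (hσW : 0 < σW) (hσB : 0 ≤ σB) (hσAB : σB < σA)
    (hpA : pA ∈ Set.Ioo (0 : ℝ) 1) (hα : α₁ ∈ Set.Ioo (0 : ℝ) 1)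
    (hθ : pA * Phic ((θhat - μ) / Real.sqrt (σW ^ 2 + σA ^ 2))
        + (1 - pA) * Phic ((θhat - μ) / Real.sqrt (σW ^ 2 + σB ^ 2)) = α₁) :
    (α₁ < 1 / 2 →
      Phic ((θhat - μ) / Real.sqrt (σW ^ 2 + σB ^ 2)) < α₁ ∧
      α₁ < Phic ((θhat - μ) / Real.sqrt (σW ^ 2 + σA ^ 2))) ∧
    (α₁ = 1 / 2 →
      Phic ((θhat - μ) / Real.sqrt (σW ^ 2 + σA ^ 2)) = 1 / 2 ∧
      Phic ((θhat - μ) / Real.sqrt (σW ^ 2 + σB ^ 2)) = 1 / 2) ∧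
    (1 / 2 < α₁ →
      Phic ((θhat - μ) / Real.sqrt (σW ^ 2 + σA ^ 2)) < α₁ ∧
      α₁ < Phic ((θhat - μ) / Real.sqrt (σW ^ 2 + σB ^ 2))) :=
  group_oblivious_selection_fractions_general μ σW σA σB pA α₁ θhat hσW hσB hσAB hpA hθ
end

section
/- (Strict concavity of the two-stage utility in the first-stage selection fraction.) For x in the feasible set X = {x ∈ (0,1) : (α₁ − p_A x)/p_B ∈ (0,1)}, let t_A(x), t_B(x) be the unique reals with Φ^c(t_A(x)) = x and Φ^c(t_B(x)) = (α₁ − p_A x)/p_B, and set F(x) = Q₂(t_A(x), t_B(x)). Then for all x₁, x₂ ∈ X with x₁ ≠ x₂ and all λ ∈ (0,1): F(λ x₁ + (1 − λ) x₂) > λ F(x₁) + (1 − λ) F(x₂). -/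
/-!
Write `surplus_G(t, θ) = E[(Q - θ)⁺; first stage passed]`. Since
`q 1{q ≥ θ} ≤ θ' 1{q ≥ θ} + (q - θ')⁺` with equality at `θ' = θ`, the utility `α₂ F(x)` is the
minimum over `θ'` of `θ' α₂ + Σ_G p_G surplus_G(t_G(x), θ')`, attained at the second-stage
threshold. It therefore suffices that each `x ↦ surplus_G(t_G(x), θ)` is concave, strictly so for
`G = A`.

Rotating the plane so that the standardized score `u` becomes a coordinate gives
`surplus_G(t, θ) = ∫_{u ≥ t} g(u) φ(u) du`, where `g(u) = E[(Q - θ)⁺ | u]` is nondecreasing, and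
strictly increasing when `σ_G > 0`. As a function of `y = Φᶜ(t)`, which is affine in `x`, this tail
integral has slope `g(t)`, nonincreasing in `y`; so it lies below its tangent lines, which is
concavity.
-/

open MeasureTheory Set

/-- Fraction of a group (with noise level `σ`) passing both stages: first-stage
standardized threshold `t`, second-stage threshold `θ` on the latent quality. -/
noncomputable def Msel (μ σW σ t θ : ℝ) : ℝ :=
  ∫ z : ℝ × ℝ,
    (if Real.sqrt (σW ^ 2 + σ ^ 2) * t ≤ σW * z.1 + σ * z.2 then (1 : ℝ) else 0)
      * (if θ ≤ μ + σW * z.1 then (1 : ℝ) else 0) * phi z.1 * phi z.2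

/-- Latent-quality mass of a group (with noise level `σ`) passing both stages. -/
noncomputable def Rsel (μ σW σ t θ : ℝ) : ℝ :=
  ∫ z : ℝ × ℝ, (μ + σW * z.1)
    * (if Real.sqrt (σW ^ 2 + σ ^ 2) * t ≤ σW * z.1 + σ * z.2 then (1 : ℝ) else 0)
    * (if θ ≤ μ + σW * z.1 then (1 : ℝ) else 0) * phi z.1 * phi z.2

/-- Feasible first-stage selection fractions `x` for group `A`
(with `p_B = 1 - p_A`). -/
def feas (pA α₁ : ℝ) : Set ℝ :=
  {x : ℝ | x ∈ Set.Ioo (0 : ℝ) 1 ∧ (α₁ - pA * x) / (1 - pA) ∈ Set.Ioo (0 : ℝ) 1}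

open ProbabilityTheory

lemma phi_pos (t : ℝ) : 0 < phi t :=
  phi_eq_gaussianPDFReal ▸ gaussianPDFReal_pos 0 1 t one_ne_zero

@[fun_prop]
lemma continuous_phi : Continuous phi := by
  unfold phi
  fun_prop

lemma Phic_eq_setIntegral_Ici (t : ℝ) : Phic t = ∫ u in Ici t, phi u := by
  rw [Phic, Phi, ← integral_phi, ← integral_add_compl measurableSet_Iic integrable_phi,
    compl_Iic, integral_Ici_eq_integral_Ioi]
  ring

lemma integrable_affine_abs_mul_phi (a b : ℝ) : Integrable fun x => (a + b * |x|) * phi x := by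
  have habs : Integrable fun x : ℝ => |x| * phi x := by
    refine ((integrable_mul_exp_neg_mul_sq (b := 1 / 2) one_half_pos).abs.div_const
      √(2 * Real.pi)).congr (ae_of_all _ fun x => ?_)
    simp only [phi, abs_mul, abs_of_pos (Real.exp_pos _)]
    ring_nf
  refine ((integrable_phi.const_mul a).add (habs.const_mul b)).congr (ae_of_all _ fun x => ?_)
  simp only [Pi.add_apply]
  ring

lemma integrable_mul_phi_of_abs_le {f : ℝ → ℝ} (hf : AEStronglyMeasurable f) {a b : ℝ}
    (hbound : ∀ x, |f x| ≤ a + b * |x|) : Integrable fun x => f x * phi x := by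
  refine (integrable_affine_abs_mul_phi a b).mono'
    (hf.mul continuous_phi.aestronglyMeasurable) (ae_of_all _ fun x => ?_)
  rw [Real.norm_eq_abs, abs_mul, abs_of_pos (phi_pos x)]
  exact mul_le_mul_of_nonneg_right (hbound x) (phi_pos x).le

lemma integrable_mul_phi_mul_phi_of_abs_le {f : ℝ × ℝ → ℝ} (hf : AEStronglyMeasurable f)
    {a b c : ℝ} (hbound : ∀ z, |f z| ≤ a + b * |z.1| + c * |z.2|) :
    Integrable fun z => f z * phi z.1 * phi z.2 := by
  have hdom : Integrable fun z : ℝ × ℝ => (a + b * |z.1| + c * |z.2|) * phi z.1 * phi z.2 := by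
    rw [Measure.volume_eq_prod]
    refine (((integrable_affine_abs_mul_phi a b).mul_prod integrable_phi).add
      (integrable_phi.mul_prod (integrable_affine_abs_mul_phi 0 c))).congr
      (ae_of_all _ fun z => ?_)
    simp only [Pi.add_apply]
    ring
  refine hdom.mono' (by fun_prop) (ae_of_all _ fun z => ?_)
  rw [Real.norm_eq_abs, abs_mul, abs_mul, abs_of_pos (phi_pos _), abs_of_pos (phi_pos _)]
  exact mul_le_mul_of_nonneg_right (mul_le_mul_of_nonneg_right (hbound z) (phi_pos _).le)
    (phi_pos _).le

lemma measurable_ite_le {α : Type*} [MeasurableSpace α] {f g : α → ℝ} (hf : Measurable f)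
    (hg : Measurable g) : Measurable fun x => if f x ≤ g x then (1 : ℝ) else 0 :=
  Measurable.ite (measurableSet_le hf hg) measurable_const measurable_const

lemma add_mul_sub_mul_le (c A B x y : ℝ) : c + A * x - B * y ≤ |c| + |A| * |x| + |B| * |y| := by
  linarith [le_abs_self c, abs_mul A x ▸ le_abs_self (A * x), abs_mul B y ▸ neg_abs_le (B * y)]

lemma abs_max_zero_mul_le {x y k : ℝ} (hxy : x ≤ y) (hy : 0 ≤ y) (hk : |k| ≤ 1) :
    |max x 0 * k| ≤ y := by
  rw [abs_mul, abs_of_nonneg (le_max_right _ _)]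
  exact (mul_le_of_le_one_right (le_max_right _ _) hk).trans (max_le hxy hy)

lemma abs_ite_le_one (P : Prop) [Decidable P] : |if P then (1 : ℝ) else 0| ≤ 1 := by
  split_ifs <;> simp

section Rotation

variable {p q : ℝ}

noncomputable def planeRotation (p q : ℝ) : (ℝ × ℝ) →ₗ[ℝ] ℝ × ℝ :=
  Matrix.toLin (Module.Basis.finTwoProd ℝ) (Module.Basis.finTwoProd ℝ) !![p, -q; q, p]

lemma planeRotation_apply (z : ℝ × ℝ) :
    planeRotation p q z = (p * z.1 - q * z.2, q * z.1 + p * z.2) := by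
  rw [planeRotation, Matrix.toLin_finTwoProd_apply]
  simp only [neg_mul, ← sub_eq_add_neg]

lemma det_planeRotation : LinearMap.det (planeRotation p q) = p ^ 2 + q ^ 2 := by
  rw [planeRotation, LinearMap.det_toLin, Matrix.det_fin_two_of]
  ring

lemma integral_comp_planeRotation_mul_phi_mul_phi (hpq : p ^ 2 + q ^ 2 = 1) (f : ℝ × ℝ → ℝ) :
    ∫ z, f (planeRotation p q z) * phi z.1 * phi z.2 = ∫ z, f z * phi z.1 * phi z.2 := by
  have hdet : LinearMap.det (planeRotation p q) ≠ 0 := by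
    rw [det_planeRotation, hpq]
    exact one_ne_zero
  have hmp : MeasurePreserving (planeRotation p q) := by
    refine ⟨(planeRotation p q).continuous_of_finiteDimensional.measurable, ?_⟩
    rw [Measure.map_linearMap_addHaar_eq_smul_addHaar volume hdet, det_planeRotation, hpq]
    simp
  have hemb : MeasurableEmbedding (planeRotation p q) :=
    ((planeRotation p q).equivOfDetNeZero hdet).toContinuousLinearEquiv.toHomeomorph
      |>.measurableEmbedding
  have hφ : ∀ z, phi (planeRotation p q z).1 * phi (planeRotation p q z).2
      = phi z.1 * phi z.2 := fun z => by
    simp only [phi, planeRotation_apply, div_mul_div_comm, ← Real.exp_add]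
    congr 2
    linear_combination (-(z.1 ^ 2 + z.2 ^ 2) / 2) * hpq
  have h := hmp.integral_comp hemb fun z => f z * phi z.1 * phi z.2
  simp only [mul_assoc, hφ] at h ⊢
  exact h

end Rotation

noncomputable def condSurplus (c A B u : ℝ) : ℝ := ∫ v, max (c + A * u - B * v) 0 * phi v

lemma integrable_max_mul_phi (c A B u : ℝ) :
    Integrable fun v => max (c + A * u - B * v) 0 * phi v :=
  integrable_mul_phi_of_abs_le (by fun_prop) fun v => by
    rw [abs_of_nonneg (le_max_right _ _)]
    exact max_le (add_mul_sub_mul_le c A B u v) (by positivity)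

lemma condSurplus_mono (c B : ℝ) {A : ℝ} (hA : 0 ≤ A) : Monotone (condSurplus c A B) :=
  fun u₁ u₂ h => integral_mono (integrable_max_mul_phi c A B u₁) (integrable_max_mul_phi c A B u₂)
    fun v => mul_le_mul_of_nonneg_right
      (max_le_max_right 0 (by nlinarith [mul_le_mul_of_nonneg_left h hA])) (phi_pos v).le

lemma condSurplus_strictMono (c : ℝ) {A B : ℝ} (hA : 0 < A) (hB : B ≠ 0) :
    StrictMono (condSurplus c A B) := by
  intro u₁ u₂ h
  rw [← sub_pos, condSurplus, condSurplus,
    ← integral_sub (integrable_max_mul_phi c A B u₂) (integrable_max_mul_phi c A B u₁)]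
  -- at `v = (c + A u₁) / B` the first positive part vanishes and the second equals `A (u₂ - u₁)`
  refine integral_pos_of_integrable_nonneg_nonzero (x := (c + A * u₁) / B) (by fun_prop)
    ((integrable_max_mul_phi c A B u₂).sub (integrable_max_mul_phi c A B u₁)) (fun v => ?_) ?_
  · simp only [Pi.zero_apply, sub_nonneg]
    exact mul_le_mul_of_nonneg_right
      (max_le_max_right 0 (by nlinarith [mul_lt_mul_of_pos_left h hA])) (phi_pos v).le
  · rw [mul_div_cancel₀ _ hB, sub_self, max_self, ← sub_mul]
    refine mul_ne_zero (ne_of_gt ?_) (phi_pos _).ne'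
    rw [max_eq_left] <;> nlinarith [mul_lt_mul_of_pos_left h hA]

lemma integrable_condSurplus_mul_phi (c A B : ℝ) :
    Integrable fun u => condSurplus c A B u * phi u := by
  have hF : Integrable fun z : ℝ × ℝ => max (c + A * z.1 - B * z.2) 0 * phi z.1 * phi z.2 :=
    integrable_mul_phi_mul_phi_of_abs_le (by fun_prop) fun z => by
      rw [abs_of_nonneg (le_max_right _ _)]
      exact max_le (add_mul_sub_mul_le c A B z.1 z.2) (by positivity)
  rw [Measure.volume_eq_prod] at hF
  refine hF.integral_prod_left.congr (ae_of_all _ fun u => ?_)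
  simp only [condSurplus, ← integral_mul_const, mul_right_comm _ (phi u)]

noncomputable def surplus (μ σW σ t θ : ℝ) : ℝ :=
  ∫ z : ℝ × ℝ, max (μ + σW * z.1 - θ) 0
    * (if Real.sqrt (σW ^ 2 + σ ^ 2) * t ≤ σW * z.1 + σ * z.2 then (1 : ℝ) else 0)
    * phi z.1 * phi z.2

section Selection

variable (μ σW σ t θ : ℝ)

lemma integrable_Msel_integrand :
    Integrable fun z : ℝ × ℝ =>
      (if Real.sqrt (σW ^ 2 + σ ^ 2) * t ≤ σW * z.1 + σ * z.2 then (1 : ℝ) else 0)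
        * (if θ ≤ μ + σW * z.1 then (1 : ℝ) else 0) * phi z.1 * phi z.2 :=
  integrable_mul_phi_mul_phi_of_abs_le (a := 1) (b := 0) (c := 0)
    ((measurable_ite_le (by fun_prop) (by fun_prop)).mul
      (measurable_ite_le (by fun_prop) (by fun_prop))).aestronglyMeasurable
    fun z => by split_ifs <;> simp

lemma integrable_Rsel_integrand :
    Integrable fun z : ℝ × ℝ => (μ + σW * z.1)
      * (if Real.sqrt (σW ^ 2 + σ ^ 2) * t ≤ σW * z.1 + σ * z.2 then (1 : ℝ) else 0)
      * (if θ ≤ μ + σW * z.1 then (1 : ℝ) else 0) * phi z.1 * phi z.2 :=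
  integrable_mul_phi_mul_phi_of_abs_le (a := |μ|) (b := |σW|) (c := 0)
    (((by fun_prop : Measurable fun z : ℝ × ℝ => μ + σW * z.1).mul
      (measurable_ite_le (by fun_prop) (by fun_prop))).mul
      (measurable_ite_le (by fun_prop) (by fun_prop))).aestronglyMeasurable
    fun z => by
      have := (abs_add_le μ (σW * z.1)).trans_eq (by rw [abs_mul])
      split_ifs <;> simp only [mul_one, mul_zero, abs_zero, zero_mul, add_zero] <;>
        first | exact this | positivity

lemma integrable_surplus_integrand :
    Integrable fun z : ℝ × ℝ => max (μ + σW * z.1 - θ) 0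
      * (if Real.sqrt (σW ^ 2 + σ ^ 2) * t ≤ σW * z.1 + σ * z.2 then (1 : ℝ) else 0)
      * phi z.1 * phi z.2 :=
  integrable_mul_phi_mul_phi_of_abs_le (a := |μ - θ|) (b := |σW|) (c := 0)
    ((by fun_prop : Measurable fun z : ℝ × ℝ => max (μ + σW * z.1 - θ) 0).mul
      (measurable_ite_le (by fun_prop) (by fun_prop))).aestronglyMeasurable
    fun z => abs_max_zero_mul_le
      (by linarith [abs_zero (α := ℝ) ▸ add_mul_sub_mul_le (μ - θ) σW 0 z.1 z.2])
      (by positivity) (abs_ite_le_one _)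

lemma Rsel_eq_mul_Msel_add_surplus :
    Rsel μ σW σ t θ = θ * Msel μ σW σ t θ + surplus μ σW σ t θ := by
  rw [Msel, surplus, ← integral_const_mul, ← integral_add
    ((integrable_Msel_integrand μ σW σ t θ).const_mul θ) (integrable_surplus_integrand μ σW σ t θ),
    Rsel]
  congr 1
  ext z
  by_cases h : θ ≤ μ + σW * z.1
  · simp only [if_pos h, max_eq_left (sub_nonneg.2 h)]
    ring
  · simp only [if_neg h, max_eq_right (by linarith : μ + σW * z.1 - θ ≤ 0)]
    ring

lemma Rsel_le_mul_Msel_add_surplus (θ' : ℝ) :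
    Rsel μ σW σ t θ ≤ θ' * Msel μ σW σ t θ + surplus μ σW σ t θ' := by
  rw [Msel, surplus, ← integral_const_mul, ← integral_add
    ((integrable_Msel_integrand μ σW σ t θ).const_mul θ') (integrable_surplus_integrand μ σW σ t θ'),
    Rsel]
  refine integral_mono (integrable_Rsel_integrand μ σW σ t θ)
    (((integrable_Msel_integrand μ σW σ t θ).const_mul θ').add
      (integrable_surplus_integrand μ σW σ t θ')) fun z => ?_
  have hφ : 0 ≤ phi z.1 * phi z.2 := mul_nonneg (phi_pos _).le (phi_pos _).le
  have hq := le_max_left (μ + σW * z.1 - θ') 0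
  have hq₀ := le_max_right (μ + σW * z.1 - θ') 0
  split_ifs <;> nlinarith

end Selection

lemma surplus_eq_setIntegral_Ici (μ : ℝ) {σW : ℝ} (σ t θ : ℝ) (hσW : σW ≠ 0) :
    surplus μ σW σ t θ = ∫ u in Ici t,
      condSurplus (μ - θ) (σW ^ 2 / √(σW ^ 2 + σ ^ 2)) (σW * σ / √(σW ^ 2 + σ ^ 2)) u * phi u := by
  rw [surplus]
  set s := √(σW ^ 2 + σ ^ 2)
  set A := σW ^ 2 / s
  set B := σW * σ / s
  have hs : 0 < s := Real.sqrt_pos.2 (by positivity)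
  have hs2 : s ^ 2 = σW ^ 2 + σ ^ 2 := Real.sq_sqrt (by positivity)
  have hpq : (σW / s) ^ 2 + (σ / s) ^ 2 = 1 := by
    field_simp
    linarith
  -- after the rotation, the first coordinate is the standardized score `(σW z₁ + σ z₂) / s`
  have hrot : ∀ w : ℝ × ℝ,
      max (μ + σW * (planeRotation (σW / s) (σ / s) w).1 - θ) 0
        * (if s * t ≤ σW * (planeRotation (σW / s) (σ / s) w).1
            + σ * (planeRotation (σW / s) (σ / s) w).2 then (1 : ℝ) else 0)
      = max (μ - θ + A * w.1 - B * w.2) 0 * (if t ≤ w.1 then (1 : ℝ) else 0) := fun w => by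
    have hscore : σW * (σW / s * w.1 - σ / s * w.2) + σ * (σ / s * w.1 + σW / s * w.2)
        = s * w.1 := by
      field_simp
      linear_combination (-w.1) * hs2
    simp only [planeRotation_apply, hscore, mul_le_mul_iff_right₀ hs, A, B]
    ring_nf
  have hint : Integrable (fun w : ℝ × ℝ =>
      max (μ - θ + A * w.1 - B * w.2) 0 * (if t ≤ w.1 then (1 : ℝ) else 0) * phi w.1 * phi w.2)
      (volume.prod volume) := by
    rw [← Measure.volume_eq_prod]
    exact integrable_mul_phi_mul_phi_of_abs_le
      ((by fun_prop : Measurable fun w : ℝ × ℝ => max (μ - θ + A * w.1 - B * w.2) 0).mul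
        (measurable_ite_le (by fun_prop) (by fun_prop))).aestronglyMeasurable fun w =>
      abs_max_zero_mul_le (add_mul_sub_mul_le _ _ _ _ _) (by positivity) (abs_ite_le_one _)
  rw [← integral_comp_planeRotation_mul_phi_mul_phi hpq, Measure.volume_eq_prod]
  simp only [hrot]
  rw [integral_prod _ hint, ← integral_indicator measurableSet_Ici]
  congr 1
  ext u
  simp only [condSurplus, indicator_apply, mem_Ici]
  split_ifs <;> simp [← integral_mul_const, mul_right_comm _ (phi u)]

section TailIntegral

variable {G : ℝ → ℝ}

lemma setIntegral_Ici_sub_mul_phi (hG : Integrable fun u => G u * phi u) (c t : ℝ) :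
    ∫ u in Ici t, (G u - c) * phi u = (∫ u in Ici t, G u * phi u) - c * Phic t := by
  rw [Phic_eq_setIntegral_Ici, ← integral_const_mul,
    ← integral_sub hG.integrableOn (integrable_phi.integrableOn.const_mul c)]
  congr 1
  ext u
  ring

lemma integrable_sub_const_mul_phi (hG : Integrable fun u => G u * phi u) (c : ℝ) :
    Integrable fun u => (G u - c) * phi u :=
  (hG.sub (integrable_phi.const_mul c)).congr (ae_of_all _ fun u => by
    simp only [Pi.sub_apply]
    ring)

lemma tangent_sub_setIntegral_Ici_eq (hG : Integrable fun u => G u * phi u) (s t : ℝ) :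
    (∫ u in Ici s, G u * phi u) + G s * (Phic t - Phic s) - ∫ u in Ici t, G u * phi u
      = ∫ u, ((Ici s).indicator (fun u => (G u - G s) * phi u) u
          - (Ici t).indicator (fun u => (G u - G s) * phi u) u) := by
  have hF := integrable_sub_const_mul_phi hG (G s)
  rw [integral_sub (hF.indicator measurableSet_Ici) (hF.indicator measurableSet_Ici),
    integral_indicator measurableSet_Ici, integral_indicator measurableSet_Ici,
    setIntegral_Ici_sub_mul_phi hG, setIntegral_Ici_sub_mul_phi hG]
  ring

lemma indicator_Ici_sub_indicator_Ici_nonneg (hGm : Monotone G) (s t u : ℝ) :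
    0 ≤ (Ici s).indicator (fun u => (G u - G s) * phi u) u
      - (Ici t).indicator (fun u => (G u - G s) * phi u) u := by
  have hφ := (phi_pos u).le
  by_cases hsu : s ≤ u
  · have := mul_nonneg (sub_nonneg.2 (hGm hsu)) hφ
    by_cases htu : t ≤ u <;> simp [hsu, htu, this]
  · have := mul_nonpos_of_nonpos_of_nonneg (sub_nonpos.2 (hGm (not_le.1 hsu).le)) hφ
    by_cases htu : t ≤ u <;> simp [hsu, htu, this]

lemma setIntegral_Ici_le_tangent (hGm : Monotone G) (hG : Integrable fun u => G u * phi u)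
    (s t : ℝ) :
    ∫ u in Ici t, G u * phi u ≤ (∫ u in Ici s, G u * phi u) + G s * (Phic t - Phic s) := by
  rw [← sub_nonneg, tangent_sub_setIntegral_Ici_eq hG]
  exact integral_nonneg (indicator_Ici_sub_indicator_Ici_nonneg hGm s t)

lemma setIntegral_Ici_lt_tangent (hGm : StrictMono G) (hG : Integrable fun u => G u * phi u)
    {s t : ℝ} (hst : t ≠ s) :
    ∫ u in Ici t, G u * phi u < (∫ u in Ici s, G u * phi u) + G s * (Phic t - Phic s) := by
  have hF := integrable_sub_const_mul_phi hG (G s)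
  rw [← sub_pos, tangent_sub_setIntegral_Ici_eq hG, integral_pos_iff_support_of_nonneg
    (indicator_Ici_sub_indicator_Ici_nonneg hGm.monotone s t)
    ((hF.indicator measurableSet_Ici).sub (hF.indicator measurableSet_Ici))]
  refine lt_of_lt_of_le ?_ (measure_mono (s := Ioo (min s t) (max s t)) fun u hu => ?_)
  · simpa [Real.volume_Ioo] using hst
  · have hne : ∀ {u}, u ≠ s → (G u - G s) * phi u ≠ 0 := fun h =>
      mul_ne_zero (sub_ne_zero.2 (hGm.injective.ne h)) (phi_pos _).ne'
    rcases hst.lt_or_gt with h | h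
    · rw [min_eq_right h.le, max_eq_left h.le] at hu
      simpa [indicator_apply, hu.1.le, not_le.2 hu.2] using hne hu.2.ne
    · rw [min_eq_left h.le, max_eq_right h.le] at hu
      simpa [indicator_apply, hu.1.le, not_le.2 hu.2] using hne hu.1.ne'

end TailIntegral

section Concavity

variable {G : ℝ → ℝ} {S : Set ℝ} {T : ℝ → ℝ} {c d : ℝ}

lemma Phic_comp_add_smul (hS : Convex ℝ S) (hT : ∀ x ∈ S, Phic (T x) = c + d * x) {x y a b : ℝ}
    (hx : x ∈ S) (hy : y ∈ S) (ha : 0 ≤ a) (hb : 0 ≤ b) (hab : a + b = 1) :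
    a * Phic (T x) + b * Phic (T y) = Phic (T (a • x + b • y)) := by
  rw [hT x hx, hT y hy, hT _ (hS hx hy ha hb hab), smul_eq_mul, smul_eq_mul]
  linear_combination c * hab

lemma concaveOn_setIntegral_Ici_comp (hGm : Monotone G) (hG : Integrable fun u => G u * phi u)
    (hS : Convex ℝ S) (hT : ∀ x ∈ S, Phic (T x) = c + d * x) :
    ConcaveOn ℝ S fun x => ∫ u in Ici (T x), G u * phi u := by
  refine ⟨hS, fun x hx y hy a b ha hb hab => ?_⟩
  set z := a • x + b • y
  have hPhic := Phic_comp_add_smul hS hT hx hy ha hb hab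
  simp only [smul_eq_mul]
  calc a * (∫ u in Ici (T x), G u * phi u) + b * ∫ u in Ici (T y), G u * phi u
      ≤ a * ((∫ u in Ici (T z), G u * phi u) + G (T z) * (Phic (T x) - Phic (T z)))
        + b * ((∫ u in Ici (T z), G u * phi u) + G (T z) * (Phic (T y) - Phic (T z))) :=
        add_le_add (mul_le_mul_of_nonneg_left (setIntegral_Ici_le_tangent hGm hG _ _) ha)
          (mul_le_mul_of_nonneg_left (setIntegral_Ici_le_tangent hGm hG _ _) hb)
    _ = ∫ u in Ici (T z), G u * phi u := by
        linear_combination ((∫ u in Ici (T z), G u * phi u) - G (T z) * Phic (T z)) * hab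
          + G (T z) * hPhic

lemma strictConcaveOn_setIntegral_Ici_comp (hGm : StrictMono G)
    (hG : Integrable fun u => G u * phi u) (hS : Convex ℝ S) (hd : d ≠ 0)
    (hT : ∀ x ∈ S, Phic (T x) = c + d * x) :
    StrictConcaveOn ℝ S fun x => ∫ u in Ici (T x), G u * phi u := by
  refine ⟨hS, fun x hx y hy hxy a b ha hb hab => ?_⟩
  set z := a • x + b • y
  have hPhic := Phic_comp_add_smul hS hT hx hy ha.le hb.le hab
  have hTxy : T x ≠ T y := fun h => hxy <| mul_left_cancel₀ hd <| by
    linarith [hT x hx, hT y hy, congrArg Phic h]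
  have htangent_le := fun t => setIntegral_Ici_le_tangent hGm.monotone hG (T z) t
  have htangent_lt := fun {t} (h : t ≠ T z) => setIntegral_Ici_lt_tangent hGm hG h
  simp only [smul_eq_mul]
  calc a * (∫ u in Ici (T x), G u * phi u) + b * ∫ u in Ici (T y), G u * phi u
      < a * ((∫ u in Ici (T z), G u * phi u) + G (T z) * (Phic (T x) - Phic (T z)))
        + b * ((∫ u in Ici (T z), G u * phi u) + G (T z) * (Phic (T y) - Phic (T z))) := by
        rcases eq_or_ne (T x) (T z) with hxz | hxz
        · exact add_lt_add_of_le_of_lt (mul_le_mul_of_nonneg_left (htangent_le _) ha.le)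
            (mul_lt_mul_of_pos_left (htangent_lt (hxz ▸ hTxy.symm)) hb)
        · exact add_lt_add_of_lt_of_le (mul_lt_mul_of_pos_left (htangent_lt hxz) ha)
            (mul_le_mul_of_nonneg_left (htangent_le _) hb.le)
    _ = ∫ u in Ici (T z), G u * phi u := by
        linear_combination ((∫ u in Ici (T z), G u * phi u) - G (T z) * Phic (T z)) * hab
          + G (T z) * hPhic

lemma concaveOn_surplus_comp (μ : ℝ) {σW : ℝ} (σ θ : ℝ) (hσW : σW ≠ 0) (hS : Convex ℝ S)
    (hT : ∀ x ∈ S, Phic (T x) = c + d * x) :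
    ConcaveOn ℝ S fun x => surplus μ σW σ (T x) θ := by
  simp only [surplus_eq_setIntegral_Ici μ σ _ θ hσW]
  exact concaveOn_setIntegral_Ici_comp (condSurplus_mono _ _ (by positivity))
    (integrable_condSurplus_mul_phi _ _ _) hS hT

lemma strictConcaveOn_surplus_comp (μ : ℝ) {σW σ : ℝ} (θ : ℝ) (hσW : σW ≠ 0) (hσ : σ ≠ 0)
    (hS : Convex ℝ S) (hd : d ≠ 0) (hT : ∀ x ∈ S, Phic (T x) = c + d * x) :
    StrictConcaveOn ℝ S fun x => surplus μ σW σ (T x) θ := by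
  simp only [surplus_eq_setIntegral_Ici μ σ _ θ hσW]
  exact strictConcaveOn_setIntegral_Ici_comp (condSurplus_strictMono _ (by positivity)
    (by positivity)) (integrable_condSurplus_mul_phi _ _ _) hS hd hT

end Concavity

lemma convex_feas (pA α₁ : ℝ) : Convex ℝ (feas pA α₁) := by
  intro x hx y hy a b ha hb hab
  refine ⟨convex_Ioo 0 1 hx.1 hy.1 ha hb hab, ?_⟩
  have : (α₁ - pA * (a • x + b • y)) / (1 - pA)
      = a • ((α₁ - pA * x) / (1 - pA)) + b • ((α₁ - pA * y) / (1 - pA)) := by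
    simp only [smul_eq_mul]
    linear_combination (-α₁ / (1 - pA)) * hab
  rw [this]
  exact convex_Ioo 0 1 hx.2 hy.2 ha hb hab

theorem two_stage_utility_strictly_concave_general
    (μ σW σA σB pA α₁ α₂ : ℝ) (tA tB θf : ℝ → ℝ)
    (hσW : 0 < σW) (hσB : 0 ≤ σB) (hσAB : σB < σA)
    (hpA : pA ∈ Set.Ioo (0 : ℝ) 1)
    (hα₂ : 0 < α₂)
    (htA : ∀ x ∈ feas pA α₁, Phic (tA x) = x)
    (htB : ∀ x ∈ feas pA α₁, Phic (tB x) = (α₁ - pA * x) / (1 - pA))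
    (hθf : ∀ x ∈ feas pA α₁,
      pA * Msel μ σW σA (tA x) (θf x) + (1 - pA) * Msel μ σW σB (tB x) (θf x) = α₂) :
    ∀ x₁ ∈ feas pA α₁, ∀ x₂ ∈ feas pA α₁, x₁ ≠ x₂ →
    ∀ lam ∈ Set.Ioo (0 : ℝ) 1,
      lam * ((pA * Rsel μ σW σA (tA x₁) (θf x₁)
              + (1 - pA) * Rsel μ σW σB (tB x₁) (θf x₁)) / α₂)
        + (1 - lam) * ((pA * Rsel μ σW σA (tA x₂) (θf x₂)
              + (1 - pA) * Rsel μ σW σB (tB x₂) (θf x₂)) / α₂)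
      < (pA * Rsel μ σW σA (tA (lam * x₁ + (1 - lam) * x₂)) (θf (lam * x₁ + (1 - lam) * x₂))
          + (1 - pA) * Rsel μ σW σB (tB (lam * x₁ + (1 - lam) * x₂)) (θf (lam * x₁ + (1 - lam) * x₂))) / α₂ := by
  intro x₁ hx₁ x₂ hx₂ hne lam ⟨hlam₀, hlam₁⟩
  obtain ⟨hpA₀, hpA₁⟩ := hpA
  have hxb := convex_feas pA α₁ hx₁ hx₂ hlam₀.le (sub_nonneg.2 hlam₁.le) (add_sub_cancel lam 1)
  simp only [smul_eq_mul] at hxb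
  set xb := lam * x₁ + (1 - lam) * x₂
  set θb := θf xb
  have hvalue_le : ∀ x ∈ feas pA α₁,
      pA * Rsel μ σW σA (tA x) (θf x) + (1 - pA) * Rsel μ σW σB (tB x) (θf x)
        ≤ θb * α₂ + pA * surplus μ σW σA (tA x) θb + (1 - pA) * surplus μ σW σB (tB x) θb := by
    intro x hx
    rw [← hθf x hx]
    nlinarith [Rsel_le_mul_Msel_add_surplus μ σW σA (tA x) (θf x) θb,
      Rsel_le_mul_Msel_add_surplus μ σW σB (tB x) (θf x) θb]
  have hvalue_eq : pA * Rsel μ σW σA (tA xb) θb + (1 - pA) * Rsel μ σW σB (tB xb) θb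
      = θb * α₂ + pA * surplus μ σW σA (tA xb) θb + (1 - pA) * surplus μ σW σB (tB xb) θb := by
    rw [Rsel_eq_mul_Msel_add_surplus, Rsel_eq_mul_Msel_add_surplus, ← hθf xb hxb]
    ring
  have hA := (strictConcaveOn_surplus_comp μ θb hσW.ne' (hσB.trans_lt hσAB).ne'
    (convex_feas pA α₁) one_ne_zero (c := 0) fun x hx => by rw [htA x hx]; ring).2
    hx₁ hx₂ hne hlam₀ (sub_pos.2 hlam₁) (add_sub_cancel lam 1)
  have hB := (concaveOn_surplus_comp μ σB θb hσW.ne' (convex_feas pA α₁)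
    (c := α₁ / (1 - pA)) (d := -pA / (1 - pA)) fun x hx => by rw [htB x hx]; ring).2
    hx₁ hx₂ hlam₀.le (sub_nonneg.2 hlam₁.le) (add_sub_cancel lam 1)
  simp only [smul_eq_mul] at hA hB
  rw [mul_div_assoc', mul_div_assoc', ← add_div, div_lt_div_iff_of_pos_right hα₂]
  nlinarith [mul_le_mul_of_nonneg_left (hvalue_le x₁ hx₁) hlam₀.le,
    mul_le_mul_of_nonneg_left (hvalue_le x₂ hx₂) (sub_nonneg.2 hlam₁.le),
    mul_lt_mul_of_pos_left hA hpA₀, mul_le_mul_of_nonneg_left hB (sub_nonneg.2 hpA₁.le)]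

/-- Strict concavity of the two-stage utility
`F(x) = Q₂(t_A(x), t_B(x))` in the first-stage selection fraction `x` of group
`A`, where `t_A(x), t_B(x)` select fractions `x` and `(α₁ - p_A x)/p_B`, and
`θf(x)` is the second-stage threshold matching the budget `α₂`. -/
theorem two_stage_utility_strictly_concave
    (μ σW σA σB pA α₁ α₂ : ℝ) (tA tB θf : ℝ → ℝ)
    (hσW : 0 < σW) (hσB : 0 ≤ σB) (hσAB : σB < σA)
    (hpA : pA ∈ Set.Ioo (0 : ℝ) 1) (hα₁ : α₁ ∈ Set.Ioo (0 : ℝ) 1)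
    (hα₂ : 0 < α₂) (hα₂' : α₂ < α₁)
    (htA : ∀ x ∈ feas pA α₁, Phic (tA x) = x)
    (htB : ∀ x ∈ feas pA α₁, Phic (tB x) = (α₁ - pA * x) / (1 - pA))
    (hθf : ∀ x ∈ feas pA α₁,
      pA * Msel μ σW σA (tA x) (θf x) + (1 - pA) * Msel μ σW σB (tB x) (θf x) = α₂) :
    ∀ x₁ ∈ feas pA α₁, ∀ x₂ ∈ feas pA α₁, x₁ ≠ x₂ →
    ∀ lam ∈ Set.Ioo (0 : ℝ) 1,
      lam * ((pA * Rsel μ σW σA (tA x₁) (θf x₁)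
              + (1 - pA) * Rsel μ σW σB (tB x₁) (θf x₁)) / α₂)
        + (1 - lam) * ((pA * Rsel μ σW σA (tA x₂) (θf x₂)
              + (1 - pA) * Rsel μ σW σB (tB x₂) (θf x₂)) / α₂)
      < (pA * Rsel μ σW σA (tA (lam * x₁ + (1 - lam) * x₂)) (θf (lam * x₁ + (1 - lam) * x₂))
          + (1 - pA) * Rsel μ σW σB (tB (lam * x₁ + (1 - lam) * x₂)) (θf (lam * x₁ + (1 - lam) * x₂))) / α₂ :=
  two_stage_utility_strictly_concave_general μ σW σA σB pA α₁ α₂ tA tB θf hσW hσB hσAB hpA hα₂ htA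
    htB hθf
end
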